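/- In the m-player game, for every 1 ≤ i ≤ m and every n ≥ 0, q_n · P(A_i) = Σ_{j=1}^{m} Σ_{k=1}^{min(l_i,l_j)} [A_{i(k)} = A_j^{(k)}] · P(A_i^{(l_i−k)}) · p_{n+k}^{A_j}. -/

import Mathlib

/-!
Let `l = |A_i|`. On the event `{τ > n}`, which is determined by the first `n` tosses, ask that
tosses `n+1, …, n+l` spell `A_i`; by independence this has probability `q_n ⬝ P(A_i)`. On it the
game ends at some toss `n + k` with `1 ≤ k ≤ l`, won by a unique player `j`. Since no pattern is a
substring of another, `A_j` cannot fit inside this copy of `A_i`, so `k ≤ l_j` and the last `k`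
letters of `A_j` are the first `k` letters of `A_i`; the tosses after `n + k` must then spell
`A_i^{(l-k)}`. Conversely every such `(j, k)` with matching overlap gives a point of the event.
The pieces are disjoint, and by independence again the piece `(j, k)` has probability
`p_{n+k}^{A_j} ⬝ P(A_i^{(l-k)})`.
-/

open MeasureTheory ENNReal

noncomputable section

/-- Probability of a single toss outcome: `true` (heads) has probability `p`,
`false` (tails) has probability `1 - p`. -/
def letterP (p : ℝ) (b : Bool) : ℝ := if b then p else 1 - p

/-- Probability of a finite string of tosses (`1` for the empty string). -/
def strP (p : ℝ) (A : List Bool) : ℝ := (A.map (letterP p)).prod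

/-- `μ` is the product measure on `{H,T}^ℕ` of i.i.d. coin tosses with heads
probability `p`: every cylinder set has the product probability. -/
def IsCoinMeasure (p : ℝ) (μ : Measure (ℕ → Bool)) : Prop :=
  ∀ (n : ℕ) (a : Fin n → Bool),
    μ {ξ | ∀ i : Fin n, ξ i = a i} = ENNReal.ofReal (∏ i, letterP p (a i))

/-- The pattern `A` (of length `l`) occurs ending exactly at toss `n`
(toss number `k ≥ 1` of `ξ` is `ξ (k - 1)`): `n ≥ l` and tosses
`n - l + 1, …, n` spell `A`. -/
def occursAt (A : List Bool) (ξ : ℕ → Bool) (n : ℕ) : Prop :=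
  A.length ≤ n ∧ (List.ofFn fun k : Fin A.length => ξ (n - A.length + k)) = A

/-- The first toss at which the pattern `A` has occurred (`⊤` if it never occurs). -/
def hitTime (A : List Bool) (ξ : ℕ → Bool) : ℕ∞ :=
  ⨅ (n : ℕ) (_ : occursAt A ξ n), (n : ℕ∞)

/-- The number of tosses until the `m`-player game ends: the minimum of the
hitting times of the patterns `A i`. -/
def gameTime {m : ℕ} (A : Fin m → List Bool) (ξ : ℕ → Bool) : ℕ∞ :=
  ⨅ i, hitTime (A i) ξ

namespace MultiRenewal

lemma strP_nonneg {p : ℝ} (hp0 : 0 ≤ p) (hp1 : p ≤ 1) (S : List Bool) : 0 ≤ strP p S :=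
  List.prod_nonneg <| by
    simp only [List.mem_map]
    rintro _ ⟨b, -, rfl⟩
    cases b <;> simp [letterP] <;> linarith

lemma strP_append (p : ℝ) (S T : List Bool) : strP p (S ++ T) = strP p S * strP p T := by
  simp [strP]

section Windows

variable {ξ η : ℕ → Bool} {t len a b : ℕ}

/-- `window ξ t len` lists tosses `t + 1, …, t + len`; toss `k` is `ξ (k - 1)`. -/
def window (ξ : ℕ → Bool) (t len : ℕ) : List Bool := List.ofFn fun r : Fin len => ξ (t + r)

@[simp] lemma length_window : (window ξ t len).length = len := List.length_ofFn

@[simp] lemma getElem_window {r : ℕ} (h : r < (window ξ t len).length) :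
    (window ξ t len)[r] = ξ (t + r) := List.getElem_ofFn ..

lemma window_add : window ξ t (a + b) = window ξ t a ++ window ξ (t + a) b := by
  simp only [window, List.ofFn_add]
  congr 2
  ext r
  simp [add_assoc]

lemma take_window (h : a ≤ len) : (window ξ t len).take a = window ξ t a := by
  obtain ⟨b, rfl⟩ := Nat.exists_eq_add_of_le h
  rw [window_add, List.take_left' length_window]

lemma drop_window : (window ξ t len).drop a = window ξ (t + a) (len - a) := by
  rcases le_total a len with h | h
  · obtain ⟨b, rfl⟩ := Nat.exists_eq_add_of_le h
    rw [window_add, List.drop_left' length_window, Nat.add_sub_cancel_left]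
  · simp [window, Nat.sub_eq_zero_of_le h, h]

lemma window_congr (h : ∀ r < t + len, ξ r = η r) : window ξ t len = window η t len :=
  List.ofFn_inj.2 <| funext fun r => h _ (by omega)

lemma window_infix {s : ℕ} (h₁ : t ≤ s) (h₂ : s + a ≤ t + b) :
    window ξ s a <:+: window ξ t b := by
  obtain ⟨c, rfl⟩ : ∃ c, b = (s - t) + a + c := ⟨t + b - s - a, by omega⟩
  rw [window_add, window_add, Nat.add_sub_cancel' h₁]
  exact List.infix_append _ _ _

end Windows

def spells (t : ℕ) (S : List Bool) : Set (ℕ → Bool) := {ξ | window ξ t S.length = S}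

section Spells

variable {ξ : ℕ → Bool} {t : ℕ} {S T : List Bool}

lemma spells_append (t : ℕ) (S T : List Bool) :
    spells t (S ++ T) = spells t S ∩ spells (t + S.length) T := by
  ext ξ
  simp only [spells, Set.mem_ofPred_eq, Set.mem_inter_iff, List.length_append, window_add]
  exact ⟨fun h => List.append_inj h length_window, fun ⟨h₁, h₂⟩ => by rw [h₁, h₂]⟩

lemma spells_disjoint (hl : S.length = T.length) (hne : S ≠ T) :
    Disjoint (spells t S) (spells t T) :=
  Set.disjoint_left.2 fun _ hS hT => hne <| hS.symm.trans <| hl ▸ hT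

lemma take_eq_window_of_mem_spells {k : ℕ} (hξ : ξ ∈ spells t S) (hk : k ≤ S.length) :
    S.take k = window ξ t k := by
  rw [← take_window hk, hξ]

lemma drop_eq_window_of_mem_spells (hξ : ξ ∈ spells t S) (k : ℕ) :
    S.drop k = window ξ (t + k) (S.length - k) := by
  rw [← drop_window, hξ]

lemma drop_mem_spells (hξ : ξ ∈ spells t S) (k : ℕ) :
    ξ ∈ spells (t + k) (S.drop k) := by
  change window ξ (t + k) (S.drop k).length = S.drop k
  rw [drop_eq_window_of_mem_spells hξ, length_window]

lemma measurableSet_spells (t : ℕ) (S : List Bool) : MeasurableSet (spells t S) := by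
  have : spells t S = ⋂ r : Fin S.length, (fun ξ : ℕ → Bool => ξ (t + r)) ⁻¹' {S[r]} := by
    ext ξ
    simp [spells, List.ext_getElem_iff, Fin.forall_iff]
  rw [this]
  exact MeasurableSet.iInter fun r => measurable_pi_apply _ (measurableSet_singleton _)

end Spells

lemma measure_spells_zero {p : ℝ} {μ : Measure (ℕ → Bool)}
    (hμ : IsCoinMeasure p μ) (L : List Bool) : μ (spells 0 L) = ENNReal.ofReal (strP p L) := by
  have hset : spells 0 L = {ξ | ∀ r : Fin L.length, ξ r = L[r]} := by
    ext ξ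
    simp [spells, List.ext_getElem_iff, Fin.forall_iff]
  rw [hset, hμ]
  exact congrArg ENNReal.ofReal (Fin.prod_univ_fun_getElem L _)

def DeterminedBy (E : Set (ℕ → Bool)) (t : ℕ) : Prop :=
  ∀ ξ η : ℕ → Bool, (∀ r < t, ξ r = η r) → ξ ∈ E → η ∈ E

lemma DeterminedBy.exists_eq_biUnion_spells {E : Set (ℕ → Bool)} {t : ℕ} (hE : DeterminedBy E t) :
    ∃ F : Finset (List Bool), (∀ L ∈ F, L.length = t) ∧ E = ⋃ L ∈ F, spells 0 L := by
  classical
  have getD_window (ξ : ℕ → Bool) {r : ℕ} (hr : r < t) : (window ξ 0 t).getD r false = ξ r := by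
    rw [List.getD_eq_getElem _ _ (by simpa using hr), getElem_window, zero_add]
  refine ⟨(Finset.univ.image fun a : Fin t → Bool => List.ofFn a).filter
    fun L => (fun r => L.getD r false) ∈ E, by simp, ?_⟩
  ext ξ
  simp only [Set.mem_iUnion, Finset.mem_filter, Finset.mem_image, Finset.mem_univ, true_and,
    exists_prop]
  constructor
  · intro hξ
    refine ⟨window ξ 0 t, ⟨⟨_, rfl⟩, hE ξ _ (fun r hr => (getD_window ξ hr).symm) hξ⟩, ?_⟩
    simp [spells]
  · rintro ⟨L, ⟨⟨a, rfl⟩, hL⟩, hξ⟩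
    have hξ : window ξ 0 t = List.ofFn a := by simpa [spells] using hξ
    exact hE _ ξ (fun r hr => hξ ▸ getD_window ξ hr) hL

lemma DeterminedBy.measurableSet {E : Set (ℕ → Bool)} {t : ℕ} (hE : DeterminedBy E t) :
    MeasurableSet E := by
  obtain ⟨F, -, rfl⟩ := hE.exists_eq_biUnion_spells
  exact F.measurableSet_biUnion fun L _ => measurableSet_spells 0 L

lemma measure_inter_spells {p : ℝ} (hp0 : 0 ≤ p) (hp1 : p ≤ 1)
    {μ : Measure (ℕ → Bool)} (hμ : IsCoinMeasure p μ) {E : Set (ℕ → Bool)} {t : ℕ}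
    (hE : DeterminedBy E t) (S : List Bool) :
    μ (E ∩ spells t S) = μ E * ENNReal.ofReal (strP p S) := by
  obtain ⟨F, hF, rfl⟩ := hE.exists_eq_biUnion_spells
  have hdisj (T : List Bool) :
      (F : Set (List Bool)).PairwiseDisjoint fun L => spells 0 (L ++ T) :=
    fun L hL L' hL' hne => spells_disjoint (by simp [hF L hL, hF L' hL']) (by simpa using hne)
  have hunion : (⋃ L ∈ F, spells 0 L) ∩ spells t S = ⋃ L ∈ F, spells 0 (L ++ S) := by
    rw [Set.iUnion₂_inter]
    refine Set.iUnion₂_congr fun L hL => ?_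
    rw [spells_append, zero_add, hF L hL]
  have hmeas : ∀ L ∈ F, MeasurableSet (spells 0 L) := fun _ _ => measurableSet_spells _ _
  rw [hunion, measure_biUnion_finset (hdisj S) fun _ _ => measurableSet_spells _ _,
    measure_biUnion_finset (by simpa using hdisj []) hmeas, Finset.sum_mul]
  refine Finset.sum_congr rfl fun L _ => ?_
  rw [measure_spells_zero hμ, measure_spells_zero hμ, strP_append p,
    ENNReal.ofReal_mul (strP_nonneg hp0 hp1 L)]

section HittingTimes

variable {A B : List Bool} {ξ η : ℕ → Bool} {N : ℕ}

lemma occursAt_iff : occursAt A ξ N ↔ A.length ≤ N ∧ ξ ∈ spells (N - A.length) A :=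
  Iff.rfl

lemma occursAt_congr (h : ∀ r < N, ξ r = η r) : occursAt A ξ N ↔ occursAt A η N := by
  rw [occursAt_iff, occursAt_iff]
  exact and_congr_right fun hl => by
    change window _ _ _ = A ↔ window _ _ _ = A
    rw [window_congr fun r hr => h r (by omega)]

lemma suffix_of_occursAt (hA : occursAt A ξ N) (hB : occursAt B ξ N)
    (hl : A.length ≤ B.length) : A <:+ B := by
  obtain ⟨hAN, hA⟩ := occursAt_iff.1 hA
  obtain ⟨hBN, hB⟩ := occursAt_iff.1 hB
  have : B.drop (B.length - A.length) = A := by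
    refine .trans ?_ hA
    rw [drop_eq_window_of_mem_spells hB]
    congr 1 <;> omega
  exact this ▸ List.drop_suffix _ _

lemma take_eq_drop_of_occursAt {n k : ℕ} (hA : ξ ∈ spells n A) (hB : occursAt B ξ (n + k))
    (hkA : k ≤ A.length) (hkB : k ≤ B.length) : A.take k = B.drop (B.length - k) := by
  obtain ⟨hBN, hB⟩ := occursAt_iff.1 hB
  rw [take_eq_window_of_mem_spells hA hkA, drop_eq_window_of_mem_spells hB]
  congr 1 <;> omega

lemma mem_spells_of_occursAt {n k : ℕ} (hB : occursAt B ξ (n + k)) (hkA : k ≤ A.length)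
    (hkB : k ≤ B.length) (hAB : A.take k = B.drop (B.length - k))
    (hrest : ξ ∈ spells (n + k) (A.drop k)) : ξ ∈ spells n A := by
  obtain ⟨hBN, hB⟩ := occursAt_iff.1 hB
  rw [← List.take_append_drop k A, spells_append, List.length_take, min_eq_left hkA, hAB]
  refine ⟨?_, hrest⟩
  have := drop_mem_spells hB (B.length - k)
  rwa [show n + k - B.length + (B.length - k) = n by omega] at this

lemma hitTime_le (h : occursAt A ξ N) : hitTime A ξ ≤ N := iInf₂_le N h

lemma le_hitTime_iff : (N : ℕ∞) ≤ hitTime A ξ ↔ ∀ t < N, ¬ occursAt A ξ t := by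
  simp only [hitTime, le_iInf_iff, Nat.cast_le]
  exact ⟨fun h t ht hocc => (h t hocc).not_gt ht, fun h t hocc => not_lt.1 fun ht => h t ht hocc⟩

lemma occursAt_of_hitTime_eq (h : hitTime A ξ = N) : occursAt A ξ N := by
  obtain ⟨t, ht⟩ : ∃ t, occursAt A ξ t := by
    by_contra! hnone
    simp [hitTime, hnone] at h
  have hsInf : hitTime A ξ = (sInf {t | occursAt A ξ t} : ℕ) := (ENat.natCast_sInf ⟨t, ht⟩).symm
  rw [h, Nat.cast_inj] at hsInf
  rw [hsInf]
  exact Nat.sInf_mem (s := {t | occursAt A ξ t}) ⟨t, ht⟩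

end HittingTimes

def overlapLengths (A B : List Bool) : Finset ℕ :=
  (Finset.Icc 1 (min A.length B.length)).filter fun k => A.take k = B.drop (B.length - k)

section Game

variable {m : ℕ} {A : Fin m → List Bool} {ξ : ℕ → Bool}

lemma lt_gameTime_iff {n : ℕ} :
    (n : ℕ∞) < gameTime A ξ ↔ ∀ j, ∀ t ≤ n, ¬ occursAt (A j) ξ t := by
  rw [← ENat.add_one_le_iff (ENat.natCast_ne_top n), ← Nat.cast_succ]
  simp only [gameTime, le_iInf_iff, le_hitTime_iff, Nat.lt_succ_iff]

def winEvent (A : Fin m → List Bool) (j : Fin m) (N : ℕ) : Set (ℕ → Bool) :=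
  {ξ | gameTime A ξ = N ∧ hitTime (A j) ξ = N}

lemma mem_winEvent_iff {j : Fin m} {N : ℕ} :
    ξ ∈ winEvent A j N ↔ occursAt (A j) ξ N ∧ ∀ j', ∀ t < N, ¬ occursAt (A j') ξ t := by
  constructor
  · rintro ⟨hgame, hhit⟩
    exact ⟨occursAt_of_hitTime_eq hhit,
      fun j' => le_hitTime_iff.1 (hgame ▸ iInf_le (fun j => hitTime (A j) ξ) j')⟩
  · rintro ⟨hocc, hfirst⟩
    have hhit : hitTime (A j) ξ = N := (hitTime_le hocc).antisymm (le_hitTime_iff.2 (hfirst j))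
    exact ⟨((iInf_le _ j).trans hhit.le).antisymm
      (le_iInf fun j' => le_hitTime_iff.2 (hfirst j')), hhit⟩

lemma determinedBy_lt_gameTime (A : Fin m → List Bool) (n : ℕ) :
    DeterminedBy {ξ | (n : ℕ∞) < gameTime A ξ} n := by
  intro ξ η hagree hξ
  simp only [Set.mem_ofPred_eq, lt_gameTime_iff] at hξ ⊢
  intro j t ht
  rw [← occursAt_congr fun r hr => hagree r (by omega)]
  exact hξ j t ht

lemma determinedBy_winEvent (A : Fin m → List Bool) (j : Fin m) (N : ℕ) :
    DeterminedBy (winEvent A j N) N := by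
  intro ξ η hagree hξ
  rw [mem_winEvent_iff] at hξ ⊢
  refine ⟨(occursAt_congr hagree).1 hξ.1, fun j' t ht => ?_⟩
  rw [← occursAt_congr fun r hr => hagree r (by omega)]
  exact hξ.2 j' t ht

variable (hsub : ∀ i j, i ≠ j → ¬ A i <:+: A j)
include hsub

lemma disjoint_winEvent {j j' : Fin m} {N N' : ℕ} (hne : (j, N) ≠ (j', N')) :
    Disjoint (winEvent A j N) (winEvent A j' N') := by
  refine Set.disjoint_left.2 fun ξ hξ hξ' => ?_
  obtain rfl : N = N' := by exact_mod_cast hξ.1.symm.trans hξ'.1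
  have hj : j ≠ j' := fun h => hne (h ▸ rfl)
  have hocc := occursAt_of_hitTime_eq hξ.2
  have hocc' := occursAt_of_hitTime_eq hξ'.2
  rcases le_total (A j).length (A j').length with hl | hl
  · exact hsub j j' hj (suffix_of_occursAt hocc hocc' hl).isInfix
  · exact hsub j' j hj.symm (suffix_of_occursAt hocc' hocc hl).isInfix

lemma exists_winEvent_of_lt_gameTime {i : Fin m} {n : ℕ} (hn : (n : ℕ∞) < gameTime A ξ)
    (hξ : ξ ∈ spells n (A i)) :
    ∃ j, ∃ k ∈ overlapLengths (A i) (A j),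
      ξ ∈ winEvent A j (n + k) ∧ ξ ∈ spells (n + k) ((A i).drop k) := by
  have hocc : occursAt (A i) ξ (n + (A i).length) := ⟨by omega, by rwa [Nat.add_sub_cancel]⟩
  have : Nonempty (Fin m) := ⟨i⟩
  obtain ⟨j, hj⟩ := ENat.exists_eq_iInf fun j => hitTime (A j) ξ
  have hle : hitTime (A j) ξ ≤ (n + (A i).length : ℕ) :=
    hj.trans_le ((iInf_le _ i).trans (hitTime_le hocc))
  obtain ⟨N, hN⟩ := ENat.ne_top_iff_exists.1 (ne_top_of_le_ne_top (ENat.natCast_ne_top _) hle)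
  have hwin : ξ ∈ winEvent A j N := ⟨hj.symm.trans hN.symm, hN.symm⟩
  have hnN : n < N := by exact_mod_cast hwin.1 ▸ hn
  have hNl : N ≤ n + (A i).length := by exact_mod_cast hN ▸ hle
  have hoccj := occursAt_of_hitTime_eq hwin.2
  have hk : N - n ≤ (A j).length := by
    by_contra! hlt
    have hji : j ≠ i := by rintro rfl; omega
    have := window_infix (ξ := ξ) (s := N - (A j).length) (t := n) (a := (A j).length)
      (b := (A i).length) (by omega) (by omega)
    rw [(occursAt_iff.1 hoccj).2, hξ] at this
    exact hsub j i hji this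
  rw [← Nat.add_sub_cancel' hnN.le] at hwin hoccj
  refine ⟨j, N - n, ?_, hwin, drop_mem_spells hξ _⟩
  simp only [overlapLengths, Finset.mem_filter, Finset.mem_Icc]
  exact ⟨⟨by omega, le_min (by omega) hk⟩, take_eq_drop_of_occursAt hξ hoccj (by omega) hk⟩

lemma lt_gameTime_inter_spells_eq_biUnion (i : Fin m) (n : ℕ) :
    {ξ | (n : ℕ∞) < gameTime A ξ} ∩ spells n (A i) =
      ⋃ x ∈ Finset.univ.sigma fun j => overlapLengths (A i) (A j),
        winEvent A x.1 (n + x.2) ∩ spells (n + x.2) ((A i).drop x.2) := by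
  ext ξ
  simp only [Set.mem_inter_iff, Set.mem_iUnion, Finset.mem_sigma, Finset.mem_univ, true_and,
    exists_prop, Sigma.exists]
  constructor
  · rintro ⟨hn, hξ⟩
    exact exists_winEvent_of_lt_gameTime hsub hn hξ
  · rintro ⟨j, k, hk, hwin, hrest⟩
    simp only [overlapLengths, Finset.mem_filter, Finset.mem_Icc, le_min_iff] at hk
    obtain ⟨⟨hk1, hkA, hkB⟩, hAB⟩ := hk
    refine ⟨?_, mem_spells_of_occursAt (occursAt_of_hitTime_eq hwin.2) hkA hkB hAB hrest⟩
    change (n : ℕ∞) < gameTime A ξ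
    rw [hwin.1]
    exact_mod_cast (by omega : n < n + k)

lemma pairwiseDisjoint_winEvent_inter_spells (s : Set ((_ : Fin m) × ℕ)) (i : Fin m) (n : ℕ) :
    s.PairwiseDisjoint fun x => winEvent A x.1 (n + x.2) ∩ spells (n + x.2) ((A i).drop x.2) := by
  intro x _ y _ hxy
  refine (disjoint_winEvent hsub fun h => hxy ?_).mono Set.inter_subset_left Set.inter_subset_left
  obtain ⟨h₁, h₂⟩ := Prod.ext_iff.1 h
  exact Sigma.ext h₁ (heq_of_eq (by omega))

end Game

end MultiRenewal

theorem multi_renewal_identity_general (p : ℝ) (hp0 : 0 < p) (hp1 : p < 1)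
    (μ : Measure (ℕ → Bool)) [IsProbabilityMeasure μ] (hμ : IsCoinMeasure p μ)
    (m : ℕ) (A : Fin m → List Bool)
    (hsub : ∀ i j, i ≠ j → ¬ (A i) <:+: (A j))
    (i : Fin m) (n : ℕ) :
    (μ {ξ | (n : ℕ∞) < gameTime A ξ}).toReal * strP p (A i) =
      ∑ j, ∑ k ∈ Finset.Icc 1 (min (A i).length (A j).length),
        (if (A i).take k = (A j).drop ((A j).length - k) then (1 : ℝ) else 0) *
          strP p ((A i).drop k) *
          (μ {ξ | gameTime A ξ = ((n + k : ℕ) : ℕ∞) ∧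
              hitTime (A j) ξ = ((n + k : ℕ) : ℕ∞)}).toReal := by
  open MultiRenewal in
  calc (μ {ξ | (n : ℕ∞) < gameTime A ξ}).toReal * strP p (A i)
      = (μ ({ξ | (n : ℕ∞) < gameTime A ξ} ∩ spells n (A i))).toReal := by
        rw [measure_inter_spells hp0.le hp1.le hμ (determinedBy_lt_gameTime A n), toReal_mul,
          toReal_ofReal (strP_nonneg hp0.le hp1.le _)]
    _ = ∑ x ∈ Finset.univ.sigma fun j => overlapLengths (A i) (A j),
          (μ (winEvent A x.1 (n + x.2) ∩ spells (n + x.2) ((A i).drop x.2))).toReal := by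
        rw [lt_gameTime_inter_spells_eq_biUnion hsub,
          measure_biUnion_finset (pairwiseDisjoint_winEvent_inter_spells hsub _ i n) fun _ _ =>
            (determinedBy_winEvent A _ _).measurableSet.inter (measurableSet_spells _ _),
          toReal_sum fun _ _ => measure_ne_top _ _]
    _ = ∑ j, ∑ k ∈ overlapLengths (A i) (A j),
          strP p ((A i).drop k) * (μ (winEvent A j (n + k))).toReal := by
        rw [Finset.sum_sigma]
        refine Finset.sum_congr rfl fun j _ => Finset.sum_congr rfl fun k _ => ?_
        rw [measure_inter_spells hp0.le hp1.le hμ (determinedBy_winEvent A j _), toReal_mul,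
          toReal_ofReal (strP_nonneg hp0.le hp1.le _), mul_comm]
    _ = _ := by
        simp only [overlapLengths, Finset.sum_filter, ite_mul, one_mul, zero_mul]
        rfl

/-- In the `m`-player game, for every `1 ≤ i ≤ m` and every
`n ≥ 0`,
`q_n ⬝ P(A_i) = Σ_{j=1}^{m} Σ_{k=1}^{min(l_i,l_j)} [A_{i(k)} = A_j^{(k)}] ⬝ P(A_i^{(l_i−k)}) ⬝ p_{n+k}^{A_j}`,
where `q_n = μ(τ > n)` and `p_n^{A_j} = μ(τ = τ_{A_j} = n)`. -/
theorem multi_renewal_identity (p : ℝ) (hp0 : 0 < p) (hp1 : p < 1)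
    (μ : Measure (ℕ → Bool)) [IsProbabilityMeasure μ] (hμ : IsCoinMeasure p μ)
    (m : ℕ) (hm : 1 ≤ m) (A : Fin m → List Bool) (hlen : ∀ i, 1 ≤ (A i).length)
    (hsub : ∀ i j, i ≠ j → ¬ (A i) <:+: (A j))
    (i : Fin m) (n : ℕ) :
    (μ {ξ | (n : ℕ∞) < gameTime A ξ}).toReal * strP p (A i) =
      ∑ j, ∑ k ∈ Finset.Icc 1 (min (A i).length (A j).length),
        (if (A i).take k = (A j).drop ((A j).length - k) then (1 : ℝ) else 0) *
          strP p ((A i).drop k) *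
          (μ {ξ | gameTime A ξ = ((n + k : ℕ) : ℕ∞) ∧
              hitTime (A j) ξ = ((n + k : ℕ) : ℕ∞)}).toReal :=
  multi_renewal_identity_general p hp0 hp1 μ hμ m A hsub i n
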